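/- Let M be a t-spike of order r. Then r ≥ 2t − 1. -/

import Mathlib

open Set

/-- A circuit of a matroid: a minimal dependent set. -/
def IsCircuit {α : Type*} (M : Matroid α) (C : Set α) : Prop :=
  M.Dep C ∧ ∀ D, D ⊂ C → ¬ M.Dep D

/-- A cocircuit of a matroid: a circuit of the dual. -/
def IsCocircuit {α : Type*} (M : Matroid α) (C : Set α) : Prop :=
  IsCircuit M✶ C

/-- `A` is an associated partition witnessing that `M` is a `t`-spike of order `r`:
a partition of the ground set into `r` two-element arms (with `r ≥ t`) such that the
union of any `t` arms is both a circuit and a cocircuit. -/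
def IsSpike {α : Type*} (M : Matroid α) (t r : ℕ) (A : Fin r → Set α) : Prop :=
  t ≤ r ∧ (∀ i, (A i).ncard = 2) ∧ (∀ i j, i ≠ j → Disjoint (A i) (A j)) ∧
    (⋃ i, A i) = M.E ∧
    ∀ I : Finset (Fin r), I.card = t →
      IsCircuit M (⋃ i ∈ I, A i) ∧ IsCocircuit M (⋃ i ∈ I, A i)

/-- The rank of a set in a matroid: the maximum cardinality of an independent subset. -/
noncomputable def rk {α : Type*} (M : Matroid α) (X : Set α) : ℕ :=
  sSup {n | ∃ I, I ⊆ X ∧ M.Indep I ∧ I.ncard = n}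

/-- The connectivity function `λ(X) = r(X) + r(E \ X) − r(M)`. -/
noncomputable def lambda {α : Type*} (M : Matroid α) (X : Set α) : ℤ :=
  (rk M X : ℤ) + (rk M (M.E \ X) : ℤ) - (rk M M.E : ℤ)

/-! Any `t - 1` arms form a proper subset of the union of `t` arms, a circuit, so they are
independent and `2 (t - 1) ≤ r(M)`. On the other hand, if `D` is the union of `t` arms and
`e ∈ D`, then `D \ {e}` is coindependent because `D` is a cocircuit, so `(E \ D) ∪ {e}` spans `M`
and `r(M) ≤ 2 (r - t) + 1`. Hence `2 t - 2 ≤ 2 r - 2 t + 1`, i.e. `r ≥ 2 t - 1`. -/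

theorem isCircuit_iff_matroid_isCircuit {α : Type*} {M : Matroid α} {C : Set α} :
    IsCircuit M C ↔ M.IsCircuit C := by
  rw [Matroid.isCircuit_iff_forall_ssubset, IsCircuit]
  refine and_congr_right fun hC ↦ forall_congr' fun D ↦ imp_congr_right fun hDC ↦ ?_
  exact Matroid.not_dep_iff (hDC.subset.trans hC.subset_ground)

theorem isCocircuit_iff_matroid_isCocircuit {α : Type*} {M : Matroid α} {K : Set α} :
    IsCocircuit M K ↔ M.IsCocircuit K :=
  isCircuit_iff_matroid_isCircuit

theorem Matroid.IsCocircuit.eRank_le_encard_compl_add_one {α : Type*} {M : Matroid α}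
    {K : Set α} (hK : M.IsCocircuit K) : M.eRank ≤ (M.E \ K).encard + 1 := by
  obtain ⟨e, he⟩ := hK.nonempty
  have hspan : M.Spanning (M.E \ (K \ {e})) :=
    Matroid.Coindep.compl_spanning (hK.isCircuit.ssubset_indep (sdiff_singleton_ssubset.2 he))
  calc M.eRank = M.eRk (M.E \ (K \ {e})) := hspan.eRk_eq.symm
    _ ≤ (M.E \ (K \ {e})).encard := M.eRk_le_encard _
    _ ≤ (insert e (M.E \ K)).encard := encard_le_encard fun x hx ↦ by
      by_cases hxe : x = e <;> simp_all
    _ ≤ (M.E \ K).encard + 1 := encard_insert_le _ _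

namespace IsSpike

variable {α : Type*} {M : Matroid α} {t r : ℕ} {A : Fin r → Set α}

theorem isCircuit_biUnion (hA : IsSpike M t r A) {I : Finset (Fin r)} (hI : I.card = t) :
    M.IsCircuit (⋃ i ∈ I, A i) :=
  isCircuit_iff_matroid_isCircuit.1 (hA.2.2.2.2 I hI).1

theorem isCocircuit_biUnion (hA : IsSpike M t r A) {I : Finset (Fin r)} (hI : I.card = t) :
    M.IsCocircuit (⋃ i ∈ I, A i) :=
  isCocircuit_iff_matroid_isCocircuit.1 (hA.2.2.2.2 I hI).2

theorem encard_biUnion (hA : IsSpike M t r A) (I : Finset (Fin r)) :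
    (⋃ i ∈ I, A i).encard = 2 * I.card := by
  have hdisj : (I : Set (Fin r)).PairwiseDisjoint A := fun i _ j _ hij ↦ hA.2.2.1 i j hij
  have harm : ∀ i, (A i).encard = 2 := fun i ↦ encard_eq_two.2 (ncard_eq_two.1 (hA.2.1 i))
  rw [← Finset.set_biUnion_coe, I.finite_toSet.encard_biUnion hdisj, finsum_mem_coe_finset,
    Finset.sum_congr rfl fun i _ ↦ harm i, Finset.sum_const, nsmul_eq_mul, mul_comm]

theorem encard_ground_sdiff_biUnion (hA : IsSpike M t r A) (I : Finset (Fin r)) :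
    (M.E \ ⋃ i ∈ I, A i).encard = 2 * (r - I.card : ℕ) := by
  have hcompl : M.E \ ⋃ i ∈ I, A i = ⋃ i ∈ Iᶜ, A i := by
    rw [← hA.2.2.2.1]
    ext x
    simp only [mem_sdiff, mem_iUnion, Finset.mem_compl, not_exists, not_and, exists_prop]
    constructor
    · rintro ⟨⟨i, hxi⟩, hx⟩
      exact ⟨i, fun hi ↦ hx i hi hxi, hxi⟩
    · rintro ⟨i, hi, hxi⟩
      refine ⟨⟨i, hxi⟩, fun j hj hxj ↦ ?_⟩
      exact (hA.2.2.1 i j (by rintro rfl; exact hi hj)).ne_of_mem hxi hxj rfl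
  rw [hcompl, hA.encard_biUnion, Finset.card_compl, Fintype.card_fin]

theorem indep_biUnion_of_card_lt (hA : IsSpike M t r A) {I : Finset (Fin r)} (hI : I.card < t) :
    M.Indep (⋃ i ∈ I, A i) := by
  obtain ⟨J, hIJ, hJ⟩ := Finset.exists_superset_card_eq hI.le (by simpa using hA.1)
  have hssub : (⋃ i ∈ I, A i) ⊂ ⋃ i ∈ J, A i := by
    refine ssubset_of_subset_of_ne (biUnion_subset_biUnion_left hIJ) fun h ↦ ?_
    have hcard := congrArg encard h
    rw [hA.encard_biUnion, hA.encard_biUnion, hJ] at hcard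
    norm_cast at hcard
    omega
  exact (hA.isCircuit_biUnion hJ).ssubset_indep hssub

theorem two_mul_sub_one_le_eRank (hA : IsSpike M t r A) : 2 * ((t - 1 : ℕ) : ℕ∞) ≤ M.eRank := by
  obtain rfl | ht := t.eq_zero_or_pos
  · simp
  obtain ⟨I, -, hI⟩ := (Finset.univ : Finset (Fin r)).exists_subset_card_eq (n := t - 1)
    (by simpa using hA.1.trans' (Nat.sub_le t 1))
  rw [← hI, ← hA.encard_biUnion]
  exact (hA.indep_biUnion_of_card_lt (by omega)).encard_le_eRank

theorem eRank_le_two_mul_sub_add_one (hA : IsSpike M t r A) :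
    M.eRank ≤ 2 * ((r - t : ℕ) : ℕ∞) + 1 := by
  obtain ⟨I, -, hI⟩ := (Finset.univ : Finset (Fin r)).exists_subset_card_eq (n := t)
    (by simpa using hA.1)
  simpa [hA.encard_ground_sdiff_biUnion, hI] using
    (hA.isCocircuit_biUnion hI).eRank_le_encard_compl_add_one

end IsSpike

theorem statement14_general {α : Type*} (M : Matroid α) (t r : ℕ)
    (A : Fin r → Set α) (hA : IsSpike M t r A) :
    2 * t - 1 ≤ r := by
  have hrank := hA.two_mul_sub_one_le_eRank.trans hA.eRank_le_two_mul_sub_add_one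
  norm_cast at hrank
  have htr := hA.1
  omega

theorem statement14 {α : Type*} (M : Matroid α) (t r : ℕ) (ht : 0 < t)
    (A : Fin r → Set α) (hA : IsSpike M t r A) :
    2 * t - 1 ≤ r :=
  statement14_general M t r A hA
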